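/- arXiv:math/0512047 — 3 statements merged into one kernel-verified Lean document; each statement's English description precedes it below -/
import Mathlib

section
/- Fix a real number r > 0. Let f = Σ_{n≥0} a_n X^n and g = Σ_{n≥0} b_n X^n be formal power series with complex coefficients such that the families ((r^n/n!)·|a_n|)_{n∈ℕ} and ((r^n/n!)·|b_n|)_{n∈ℕ} are summable. Then the family ((r^n/n!)·|c_n|)_{n∈ℕ} is summable, where c_n = Σ_{k=0}^{n} a_k·b_{n−k} is the n-th coefficient of the product f·g, and moreover Σ_{n≥0} (r^n/n!)·|c_n| ≤ (Σ_{n≥0} (r^n/n!)·|a_n|)·(Σ_{n≥0} (r^n/n!)·|b_n|). -/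
/-!
Writing `w_n(f) = r^n/n! · ‖a_n‖`, the estimate `‖∑_{i+j=n} a_i b_j‖ ≤ ∑_{i+j=n} ‖a_i‖ ‖b_j‖` and
`i! j! ≤ (i+j)!` give `w_n(f g) ≤ ∑_{i+j=n} w_i(f) w_j(g)`: the weights `r^n/n!` are
submultiplicative along the antidiagonal. Summing over `n` and using the Cauchy product formula
for the absolutely summable families `w(f)`, `w(g)` gives the claim.
-/

open PowerSeries Finset Nat

theorem pow_add_div_factorial_add_le {r : ℝ} (hr : 0 ≤ r) (i j : ℕ) :
    r ^ (i + j) / (i + j)! ≤ r ^ i / i ! * (r ^ j / j !) := by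
  rw [pow_add, div_mul_div_comm (r ^ i)]
  refine div_le_div_of_nonneg_left (by positivity) (by positivity) ?_
  exact_mod_cast Nat.le_of_dvd (factorial_pos _) (factorial_mul_factorial_dvd_factorial_add i j)

section CauchyProduct

variable {a b c : ℕ → ℝ} (ha₀ : 0 ≤ a) (hb₀ : 0 ≤ b) (ha : Summable a) (hb : Summable b)
  (hc : ∀ n, c n ≤ ∑ kl ∈ antidiagonal n, a kl.1 * b kl.2)
include ha₀ hb₀ ha hb

theorem summable_sum_mul_antidiagonal_of_nonneg :
    Summable fun n => ∑ kl ∈ antidiagonal n, a kl.1 * b kl.2 :=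
  summable_sum_mul_antidiagonal_of_summable_mul (ha.mul_of_nonneg hb ha₀ hb₀)

include hc

theorem summable_of_le_sum_mul_antidiagonal (hc₀ : 0 ≤ c) : Summable c :=
  (summable_sum_mul_antidiagonal_of_nonneg ha₀ hb₀ ha hb).of_nonneg_of_le hc₀ hc

theorem tsum_le_tsum_mul_tsum_of_le_sum_mul_antidiagonal (hc₀ : 0 ≤ c) :
    ∑' n, c n ≤ (∑' n, a n) * ∑' n, b n := by
  rw [ha.tsum_mul_tsum_eq_tsum_sum_antidiagonal hb (ha.mul_of_nonneg hb ha₀ hb₀)]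
  exact (summable_of_le_sum_mul_antidiagonal ha₀ hb₀ ha hb hc hc₀).tsum_le_tsum hc
    (summable_sum_mul_antidiagonal_of_nonneg ha₀ hb₀ ha hb)

end CauchyProduct

namespace PowerSeries

variable {R : Type*} [NormedRing R] {r : ℝ}

noncomputable def weightedCoeffNorm (r : ℝ) (f : R⟦X⟧) (n : ℕ) : ℝ :=
  r ^ n / n ! * ‖coeff n f‖

theorem weightedCoeffNorm_nonneg (hr : 0 ≤ r) (f : R⟦X⟧) : 0 ≤ weightedCoeffNorm r f :=
  fun _ => by unfold weightedCoeffNorm; positivity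

theorem weightedCoeffNorm_mul_le (hr : 0 ≤ r) (f g : R⟦X⟧) (n : ℕ) :
    weightedCoeffNorm r (f * g) n ≤
      ∑ kl ∈ antidiagonal n, weightedCoeffNorm r f kl.1 * weightedCoeffNorm r g kl.2 := by
  unfold weightedCoeffNorm
  calc r ^ n / n ! * ‖coeff n (f * g)‖
      ≤ r ^ n / n ! * ∑ kl ∈ antidiagonal n, ‖coeff kl.1 f‖ * ‖coeff kl.2 g‖ := by
        rw [coeff_mul]
        gcongr
        exact (norm_sum_le _ _).trans (sum_le_sum fun _ _ => norm_mul_le _ _)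
    _ = ∑ kl ∈ antidiagonal n, r ^ (kl.1 + kl.2) / (kl.1 + kl.2)! *
          (‖coeff kl.1 f‖ * ‖coeff kl.2 g‖) := by
        rw [mul_sum]
        refine sum_congr rfl fun kl hkl => ?_
        rw [mem_antidiagonal.mp hkl]
    _ ≤ _ := sum_le_sum fun kl _ =>
        (mul_le_mul_of_nonneg_right (pow_add_div_factorial_add_le hr _ _) (by positivity)).trans_eq
          (by ring)

end PowerSeries

/-- if the families ((r^n/n!)|a_n|) and ((r^n/n!)|b_n|) attached to
`f = Σ a_n X^n` and `g = Σ b_n X^n` are summable, then so is the corresponding family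
for the product `f·g` (whose n-th coefficient is `c_n = Σ_{k=0}^n a_k b_{n-k}`), and
`‖f·g‖_r ≤ ‖f‖_r · ‖g‖_r`. -/
theorem wnorm_mul_le (r : ℝ) (hr : 0 < r) (f g : PowerSeries ℂ)
    (hf : Summable fun n : ℕ => r ^ n / n.factorial * ‖PowerSeries.coeff n f‖)
    (hg : Summable fun n : ℕ => r ^ n / n.factorial * ‖PowerSeries.coeff n g‖) :
    (∀ n : ℕ, PowerSeries.coeff n (f * g) =
      ∑ k ∈ Finset.range (n + 1), PowerSeries.coeff k f * PowerSeries.coeff (n - k) g) ∧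
    (Summable fun n : ℕ => r ^ n / n.factorial * ‖PowerSeries.coeff n (f * g)‖) ∧
    (∑' n : ℕ, r ^ n / n.factorial * ‖PowerSeries.coeff n (f * g)‖) ≤
      (∑' n : ℕ, r ^ n / n.factorial * ‖PowerSeries.coeff n f‖) *
        (∑' n : ℕ, r ^ n / n.factorial * ‖PowerSeries.coeff n g‖) := by
  have hf₀ := weightedCoeffNorm_nonneg hr.le f
  have hg₀ := weightedCoeffNorm_nonneg hr.le g
  have hfg₀ := weightedCoeffNorm_nonneg hr.le (f * g)
  have hle := weightedCoeffNorm_mul_le hr.le f g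
  refine ⟨fun n => ?_, summable_of_le_sum_mul_antidiagonal hf₀ hg₀ hf hg hle hfg₀,
    tsum_le_tsum_mul_tsum_of_le_sum_mul_antidiagonal hf₀ hg₀ hf hg hle hfg₀⟩
  rw [coeff_mul, Nat.sum_antidiagonal_eq_sum_range_succ fun k l => coeff k f * coeff l g]
end

section
/- Let G be the subring of ℂ[[X]] consisting of power series Σ_{n≥0} a_n X^n for which there exist A, C > 0 with |a_n| ≤ A·C^n·n! for all n. If f ∈ G has nonzero constant coefficient, then the inverse of f in ℂ[[X]] again belongs to G; that is, f is a unit of G. Consequently G is a local ring whose maximal ideal is exactly the set of elements of G with vanishing constant coefficient. -/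
/-!
Write `f = Σ aₙ Xⁿ` and `f⁻¹ = Σ bₙ Xⁿ`, so that `b_{n+1} = -a₀⁻¹ Σ_{i+j=n} a_{i+1} b_j`.
Since `(i+1)! j! ≤ (n+1)!`, strong induction gives `‖bₙ‖ ≤ B Dⁿ n!` with `B = ‖a₀⁻¹‖` and
`D = C (1 + A B)`: this choice of `D` makes `A B Σ_{i+j=n} C^{i+1} D^j = D^{n+1} - C^{n+1}` a
telescoping geometric sum. Hence `G` is closed under inversion, its units are the series with
`a₀ ≠ 0`, and the nonunits form the kernel of `f ↦ a₀`, so `G` is local.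
-/

/-- The Gevrey-type growth condition defining the ring `G = k₀ = W_pt(0)` of the paper
(written in the variable `X = τ⁻¹`): `|a_n| ≤ A·C^n·n!` for some `A, C > 0`. -/
def Gevrey (f : PowerSeries ℂ) : Prop :=
  ∃ A C : ℝ, 0 < A ∧ 0 < C ∧
    ∀ n : ℕ, ‖PowerSeries.coeff n f‖ ≤ A * C ^ n * n.factorial

open Finset PowerSeries
open scoped Nat

theorem Nat.factorial_mul_factorial_le_factorial_add (m n : ℕ) : m ! * n ! ≤ (m + n)! :=
  Nat.le_of_dvd (Nat.factorial_pos _) (Nat.factorial_mul_factorial_dvd_factorial_add m n)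

theorem Finset.Nat.sum_antidiagonal_pow_mul_pow_mul_sub {R : Type*} [CommRing R] (x y : R)
    (n : ℕ) : (∑ p ∈ antidiagonal n, x ^ p.1 * y ^ p.2) * (x - y) = x ^ (n + 1) - y ^ (n + 1) := by
  rw [Finset.Nat.sum_antidiagonal_eq_sum_range_succ_mk]
  simpa using geom_sum₂_mul x y (n + 1)

namespace IsLocalRing

variable {R K : Type*} [CommRing R] [Ring K]

theorem of_isUnit_iff_map_ne_zero [Nontrivial K] (ρ : R →+* K)
    (h : ∀ x, IsUnit x ↔ ρ x ≠ 0) : IsLocalRing R := by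
  have : Nontrivial R := ⟨0, 1, fun h01 => (h 0).mp (h01 ▸ isUnit_one) (map_zero ρ)⟩
  refine of_isUnit_or_isUnit_one_sub_self fun a => ?_
  by_cases ha : ρ a = 0
  · exact .inr ((h _).mpr (by simp [ha]))
  · exact .inl ((h a).mpr ha)

theorem maximalIdeal_eq_ker_of_isUnit_iff [IsLocalRing R] (ρ : R →+* K)
    (h : ∀ x, IsUnit x ↔ ρ x ≠ 0) : maximalIdeal R = RingHom.ker ρ := by
  ext x
  simp [mem_maximalIdeal, mem_nonunits_iff, h]

end IsLocalRing

namespace PowerSeries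

theorem coeff_succ_inv {k : Type*} [Field k] (n : ℕ) (f : k⟦X⟧) :
    coeff (n + 1) f⁻¹ =
      -(constantCoeff f)⁻¹ * ∑ p ∈ antidiagonal n, coeff (p.1 + 1) f * coeff p.2 f⁻¹ := by
  rw [coeff_inv, if_neg n.succ_ne_zero, Finset.Nat.sum_antidiagonal_succ, if_neg (lt_irrefl _),
    zero_add]
  congr 1
  refine sum_congr rfl fun p hp => if_pos ?_
  have := HasAntidiagonal.mem_antidiagonal.mp hp
  dsimp only
  omega

theorem isUnit_iff_constantCoeff_ne_zero_of_inv_mem {k σ : Type*} [Field k] [SetLike σ k⟦X⟧]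
    [SubringClass σ k⟦X⟧] {S : σ} (hS : ∀ f ∈ S, f⁻¹ ∈ S) (x : S) :
    IsUnit x ↔ constantCoeff (x : k⟦X⟧) ≠ 0 := by
  refine ⟨fun hx => ((hx.map (SubringClass.subtype S)).map constantCoeff).ne_zero, fun hx => ?_⟩
  exact IsUnit.of_mul_eq_one ⟨_, hS _ x.2⟩ (Subtype.ext (PowerSeries.mul_inv_cancel _ hx))

theorem norm_coeff_inv_le {𝕜 : Type*} [NormedField 𝕜] {f : 𝕜⟦X⟧} {A C : ℝ} (hA : 0 ≤ A)
    (hC : 0 ≤ C) (hf : ∀ n, ‖coeff n f‖ ≤ A * C ^ n * n !) (n : ℕ) :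
    ‖coeff n f⁻¹‖ ≤ ‖(constantCoeff f)⁻¹‖ * (C * (1 + A * ‖(constantCoeff f)⁻¹‖)) ^ n * n ! := by
  set B := ‖(constantCoeff f)⁻¹‖
  set D := C * (1 + A * B)
  have hDC : D - C = A * B * C := by ring
  induction n using Nat.strong_induction_on with
  | _ n ih =>
  rcases n with _ | m
  · simp [B]
  have hterm : ∀ p ∈ antidiagonal m, ‖coeff (p.1 + 1) f * coeff p.2 f⁻¹‖ ≤
      A * B * (m + 1)! * C * (C ^ p.1 * D ^ p.2) := by
    intro p hp
    rw [HasAntidiagonal.mem_antidiagonal] at hp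
    have hfac : ((p.1 + 1)! * p.2 ! : ℝ) ≤ (m + 1)! := by
      have := Nat.factorial_mul_factorial_le_factorial_add (p.1 + 1) p.2
      rw [add_right_comm, hp] at this
      exact_mod_cast this
    calc ‖coeff (p.1 + 1) f * coeff p.2 f⁻¹‖
        ≤ (A * C ^ (p.1 + 1) * (p.1 + 1)!) * (B * D ^ p.2 * p.2 !) := by
          rw [norm_mul]
          exact mul_le_mul (hf _) (ih _ (by omega)) (norm_nonneg _) (by positivity)
      _ = A * B * ((p.1 + 1)! * p.2 ! : ℝ) * C * (C ^ p.1 * D ^ p.2) := by ring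
      _ ≤ _ := by gcongr
  calc ‖coeff (m + 1) f⁻¹‖
      ≤ B * ∑ p ∈ antidiagonal m, A * B * (m + 1)! * C * (C ^ p.1 * D ^ p.2) := by
        rw [coeff_succ_inv, norm_mul, norm_neg]
        gcongr
        exact (norm_sum_le _ _).trans (sum_le_sum hterm)
    _ = B * (m + 1)! * (D ^ (m + 1) - C ^ (m + 1)) := by
        have hgeom := Finset.Nat.sum_antidiagonal_pow_mul_pow_mul_sub C D m
        rw [← neg_sub D C, hDC] at hgeom
        rw [← mul_sum]
        linear_combination (-(B * (m + 1)!)) * hgeom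
    _ ≤ B * D ^ (m + 1) * (m + 1)! := by
        have : 0 ≤ B * (m + 1)! * C ^ (m + 1) := by positivity
        linarith

end PowerSeries

theorem Gevrey.inv {f : PowerSeries ℂ} (hf : Gevrey f) : Gevrey f⁻¹ := by
  obtain ⟨A, C, hA, hC, hbound⟩ := hf
  set B := ‖(constantCoeff f)⁻¹‖
  -- `B = 0` when `constantCoeff f = 0`, in which case `f⁻¹ = 0`.
  refine ⟨B + 1, C * (1 + A * B), by positivity, by positivity, fun n => ?_⟩
  refine (norm_coeff_inv_le hA.le hC.le hbound n).trans ?_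
  gcongr
  linarith

/-- if `f ∈ G` has nonzero constant coefficient, then its inverse in
`ℂ[[X]]` again belongs to `G` (so `f` is a unit of `G`); consequently `G` (realized as
a subalgebra `S` of `ℂ[[X]]`) is a local ring whose maximal ideal is exactly the set of
elements of `G` with vanishing constant coefficient. -/
theorem gevrey_local_ring (S : Subalgebra ℂ (PowerSeries ℂ))
    (hS : (S : Set (PowerSeries ℂ)) = {f | Gevrey f}) :
    (∀ f : PowerSeries ℂ, Gevrey f → PowerSeries.constantCoeff f ≠ 0 →
      ∃ g : PowerSeries ℂ, Gevrey g ∧ f * g = 1 ∧ g * f = 1) ∧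
    ∃ h : IsLocalRing S,
      ((@IsLocalRing.maximalIdeal S _ h : Ideal S) : Set S) =
        {f : S | PowerSeries.constantCoeff (f : PowerSeries ℂ) = 0} := by
  have hinv : ∀ f ∈ S, f⁻¹ ∈ S := by
    simpa only [← SetLike.mem_coe, hS, Set.mem_ofPred_eq] using fun f hf => Gevrey.inv hf
  have hunit := isUnit_iff_constantCoeff_ne_zero_of_inv_mem hinv
  let ρ : S →+* ℂ := constantCoeff.comp (SubringClass.subtype S)
  have hloc := IsLocalRing.of_isUnit_iff_map_ne_zero ρ hunit
  refine ⟨fun f hf h0 => ⟨f⁻¹, hf.inv, PowerSeries.mul_inv_cancel f h0,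
    PowerSeries.inv_mul_cancel f h0⟩, hloc, ?_⟩
  rw [IsLocalRing.maximalIdeal_eq_ker_of_isUnit_iff ρ hunit]
  rfl
end

section
/- Let U be an open subset of ℂ^d and let (f_j)_{j∈ℕ} be a sequence of holomorphic functions on U. The following are equivalent: (a) for every compact subset K ⊆ U there exists a constant C > 0 such that sup_{x∈K} |f_j(x)| ≤ C^{j+1}·j! for all j ∈ ℕ; (b) there exist an open set W ⊆ U × ℂ containing U × {0} and a holomorphic function F : W → ℂ such that for every (x,t) ∈ W the series Σ_{j≥0} f_j(x)·t^j/j! converges absolutely with sum F(x,t). -/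
open Metric Set FormalMultilinearSeries
open scoped NNReal Nat

/-!
(a) ⇒ (b): where `‖f j‖ ≤ C ^ (j + 1) * j !`, the terms of the series are bounded by
`C * 2⁻ʲ` as long as `‖t‖ ≤ (2 * C)⁻¹`. The Cauchy estimate turns this into a summable bound on
their derivatives on a slightly smaller set, so the sum is holomorphic there.

(b) ⇒ (a): by the tube lemma, `F` is holomorphic and bounded by some `M` on `K × closedBall 0 ε`.
For `x ∈ K` the Taylor coefficients of `t ↦ F (x, t)` at `0` are `f j x / j !`, and Cauchy's
inequality gives `‖f j x‖ ≤ j ! * M / ε ^ j`.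
-/

section

variable {E F : Type*} [NormedAddCommGroup E] [NormedSpace ℂ E]
  [NormedAddCommGroup F] [NormedSpace ℂ F]

theorem norm_fderiv_le_of_forall_mem_closedBall_norm_le {g : E → F} {p : E} {R M : ℝ}
    (hR : 0 < R) (hg : DifferentiableOn ℂ g (closedBall p R))
    (hM : ∀ q ∈ closedBall p R, ‖g q‖ ≤ M) : ‖fderiv ℂ g p‖ ≤ M / R := by
  have hM0 : 0 ≤ M := (norm_nonneg _).trans (hM p (mem_closedBall_self hR.le))
  refine ContinuousLinearMap.opNorm_le_of_unit_norm (div_nonneg hM0 hR.le) fun v hv => ?_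
  have hline : MapsTo (fun z : ℂ => p + z • v) (closedBall 0 R) (closedBall p R) := by
    intro z hz
    simpa [norm_smul, hv] using hz
  have hslice : DifferentiableOn ℂ (fun z : ℂ => g (p + z • v)) (closedBall 0 R) :=
    hg.comp ((differentiable_id.smul_const v).const_add p).differentiableOn hline
  have hderiv : deriv (fun z : ℂ => g (p + z • v)) 0 = fderiv ℂ g p v := by
    have hgp : DifferentiableAt ℂ g p :=
      hg.differentiableAt (closedBall_mem_nhds p hR)
    have hv' : HasDerivAt (fun z : ℂ => p + z • v) v 0 := by
      simpa using ((hasDerivAt_id (0 : ℂ)).smul_const v).const_add p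
    exact (hgp.hasFDerivAt.comp_hasDerivAt_of_eq 0 hv' (by simp)).deriv
  rw [← hderiv]
  exact Complex.norm_deriv_le_of_forall_mem_sphere_norm_le hR
    (hslice.diffContOnCl_ball subset_rfl)
    fun z hz => hM _ (hline (sphere_subset_closedBall hz))

theorem differentiableOn_tsum_of_norm_le [CompleteSpace F] {ι : Type*} {g : ι → E → F}
    {u : ι → ℝ} {V : Set E} (hu : Summable u) (hV : IsOpen V)
    (hg : ∀ i, DifferentiableOn ℂ (g i) V) (hgu : ∀ i, ∀ q ∈ V, ‖g i q‖ ≤ u i) :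
    DifferentiableOn ℂ (fun q => ∑' i, g i q) V := by
  intro p hp
  obtain ⟨r, hr, hpr⟩ := isOpen_iff.mp hV p hp
  have hr2 : 0 < r / 2 := half_pos hr
  have hcl : ∀ q ∈ ball p (r / 2), closedBall q (r / 2) ⊆ V := fun q hq =>
    (closedBall_subset_ball' (by linarith [mem_ball.mp hq])).trans hpr
  have hsum := hasFDerivAt_tsum_of_isPreconnected (hu.div_const (r / 2)) isOpen_ball
    (convex_ball p (r / 2)).isPreconnected
    (fun i q hq => ((hg i).differentiableAt
      (hV.mem_nhds (hcl q hq (mem_closedBall_self hr2.le)))).hasFDerivAt)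
    (fun i q hq => norm_fderiv_le_of_forall_mem_closedBall_norm_le hr2
      ((hg i).mono (hcl q hq)) fun y hy => hgu i y (hcl q hq hy))
    (mem_ball_self hr2) (hu.of_norm_bounded fun i => hgu i p hp) (mem_ball_self hr2)
  exact hsum.differentiableAt.differentiableWithinAt

end

section

variable {𝕜 : Type*} [NontriviallyNormedField 𝕜]

theorem hasFPowerSeriesOnBall_ofScalars_of_hasSum {g : 𝕜 → 𝕜} {c : ℕ → 𝕜} {z : 𝕜} {r : ℝ≥0}
    (hr : 0 < r) (hc : Summable fun n => ‖c n‖ * (r : ℝ) ^ n)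
    (hg : ∀ t ∈ ball (0 : 𝕜) r, HasSum (fun n => c n * t ^ n) (g (z + t))) :
    HasFPowerSeriesOnBall g (ofScalars 𝕜 c) z r where
  r_le := (ofScalars 𝕜 c).le_radius_of_summable_norm (by simpa only [ofScalars_norm] using hc)
  r_pos := by exact_mod_cast hr
  hasSum {t} ht := by
    simpa only [ofScalars_apply_eq, smul_eq_mul] using
      hg t (by simpa only [mem_ball_zero_iff, mem_eball_zero_iff, enorm_lt_coe,
        ← NNReal.coe_lt_coe, coe_nnnorm] using ht)

theorem HasFPowerSeriesAt.iteratedDeriv_eq_factorial_mul [CompleteSpace 𝕜] [CharZero 𝕜]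
    {g : 𝕜 → 𝕜} {c : ℕ → 𝕜} {z : 𝕜} (hg : HasFPowerSeriesAt g (ofScalars 𝕜 c) z) (n : ℕ) :
    iteratedDeriv n g z = n ! * c n := by
  have hc := congrFun ((ofScalars_series_eq_iff 𝕜 c _).mp
    (hg.eq_formalMultilinearSeries hg.analyticAt.hasFPowerSeriesAt)) n
  rw [hc, mul_div_cancel₀ _ (Nat.cast_ne_zero.mpr n.factorial_ne_zero)]

theorem HasFPowerSeriesAt.norm_coeff_le {g : ℂ → ℂ} {c : ℕ → ℂ} {z : ℂ} {r M : ℝ}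
    (hg : HasFPowerSeriesAt g (ofScalars ℂ c) z) (hr : 0 < r) (hd : DiffContOnCl ℂ g (ball z r))
    (hM : ∀ t ∈ sphere z r, ‖g t‖ ≤ M) (n : ℕ) : ‖c n‖ ≤ M / r ^ n := by
  have hn : (0 : ℝ) < n ! := mod_cast n.factorial_pos
  have := Complex.norm_iteratedDeriv_le_of_forall_mem_sphere_norm_le n hr hd hM
  rw [hg.iteratedDeriv_eq_factorial_mul, norm_mul, Complex.norm_natCast, mul_div_assoc] at this
  exact le_of_mul_le_mul_left this hn

end

theorem IsCompact.exists_prod_closedBall_subset {X Y : Type*} [TopologicalSpace X]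
    [PseudoMetricSpace Y] {K : Set X} (hK : IsCompact K) {W : Set (X × Y)} (hW : IsOpen W)
    {y : Y} (hKW : K ×ˢ {y} ⊆ W) : ∃ ε > 0, K ×ˢ closedBall y ε ⊆ W := by
  obtain ⟨u, v, -, hv, hKu, hyv, huv⟩ := generalized_tube_lemma hK isCompact_singleton hW hKW
  obtain ⟨ε, hε, hεv⟩ := nhds_basis_closedBall.mem_iff.mp (hv.mem_nhds (hyv rfl))
  exact ⟨ε, hε, (prod_mono hKu hεv).trans huv⟩

theorem norm_mul_pow_div_factorial_le {a t : ℂ} {C : ℝ} {j : ℕ} (hC : 0 < C)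
    (ha : ‖a‖ ≤ C ^ (j + 1) * j !) (ht : ‖t‖ ≤ (2 * C)⁻¹) :
    ‖a * t ^ j / (j ! : ℂ)‖ ≤ C * (1 / 2) ^ j := by
  have hj : (0 : ℝ) < j ! := mod_cast j.factorial_pos
  rw [norm_div, norm_mul, norm_pow, Complex.norm_natCast, div_le_iff₀ hj]
  calc ‖a‖ * ‖t‖ ^ j ≤ (C ^ (j + 1) * j !) * (2 * C)⁻¹ ^ j := by gcongr
    _ = C * (C * (2 * C)⁻¹) ^ j * j ! := by ring
    _ = C * (1 / 2) ^ j * j ! := by rw [mul_inv_rev, mul_inv_cancel_left₀ hC.ne', one_div]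

section

variable {E : Type*} [NormedAddCommGroup E] [NormedSpace ℂ E] {f : ℕ → E → ℂ}

theorem exists_hasSum_of_locally_norm_le_pow_mul_factorial {U : Set E}
    (hf : ∀ j, DifferentiableOn ℂ (f j) U)
    (hloc : ∀ x ∈ U, ∃ s, IsOpen s ∧ x ∈ s ∧ s ⊆ U ∧
      ∃ C : ℝ, 0 < C ∧ ∀ j, ∀ y ∈ s, ‖f j y‖ ≤ C ^ (j + 1) * j !) :
    ∃ (W : Set (E × ℂ)) (F : E × ℂ → ℂ),
      IsOpen W ∧ W ⊆ U ×ˢ (Set.univ : Set ℂ) ∧ (∀ x ∈ U, ((x, (0 : ℂ)) ∈ W)) ∧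
      DifferentiableOn ℂ F W ∧
      ∀ p ∈ W, (Summable fun j : ℕ => ‖f j p.1 * p.2 ^ j / (j ! : ℂ)‖) ∧
        HasSum (fun j : ℕ => f j p.1 * p.2 ^ j / j !) (F p) := by
  choose! s hs hxs hsU C hC hfC using hloc
  set V : E → Set (E × ℂ) := fun x => s x ×ˢ ball 0 (2 * C x)⁻¹
  have hVopen : ∀ x ∈ U, IsOpen (V x) := fun x hx => (hs x hx).prod isOpen_ball
  have hVU : ∀ x ∈ U, V x ⊆ U ×ˢ univ := fun x hx => prod_mono (hsU x hx) (subset_univ _)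
  have hterm : ∀ x ∈ U, ∀ j, ∀ p ∈ V x, ‖f j p.1 * p.2 ^ j / (j ! : ℂ)‖ ≤ C x * (1 / 2) ^ j :=
    fun x hx j p hp => norm_mul_pow_div_factorial_le (hC x hx) (hfC x hx j p.1 hp.1)
      (mem_ball_zero_iff.mp hp.2).le
  have hdiff : ∀ j, DifferentiableOn ℂ (fun p : E × ℂ => f j p.1 * p.2 ^ j / j !) (U ×ˢ univ) :=
    fun j => by fun_prop (disch := exact mapsTo_fst_prod)
  have hsummable : ∀ x ∈ U, Summable fun j : ℕ => C x * (1 / 2 : ℝ) ^ j :=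
    fun x _ => summable_geometric_two.mul_left _
  refine ⟨⋃ x ∈ U, V x, fun p => ∑' j, f j p.1 * p.2 ^ j / j !,
    isOpen_biUnion hVopen, iUnion₂_subset hVU,
    fun x hx => mem_biUnion hx ⟨hxs x hx, mem_ball_self (by have := hC x hx; positivity)⟩,
    fun p hp => ?_, fun p hp => ?_⟩ <;> obtain ⟨x, hx, hpx⟩ := mem_iUnion₂.mp hp
  · exact ((differentiableOn_tsum_of_norm_le (hsummable x hx) (hVopen x hx)
      (fun j => (hdiff j).mono (hVU x hx)) (hterm x hx)).differentiableAt
      ((hVopen x hx).mem_nhds hpx)).differentiableWithinAt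
  · have habs := (hsummable x hx).of_nonneg_of_le (fun j => norm_nonneg _)
      fun j => hterm x hx j p hpx
    exact ⟨habs, habs.of_norm.hasSum⟩

theorem exists_norm_le_pow_mul_factorial_of_hasSum {W : Set (E × ℂ)} {F : E × ℂ → ℂ}
    (hW : IsOpen W) (hF : DifferentiableOn ℂ F W)
    (hsum : ∀ p ∈ W, (Summable fun j : ℕ => ‖f j p.1 * p.2 ^ j / (j ! : ℂ)‖) ∧
      HasSum (fun j : ℕ => f j p.1 * p.2 ^ j / j !) (F p))
    {K : Set E} (hK : IsCompact K) (hKW : ∀ x ∈ K, (x, (0 : ℂ)) ∈ W) :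
    ∃ C : ℝ, 0 < C ∧ ∀ j, ∀ x ∈ K, ‖f j x‖ ≤ C ^ (j + 1) * j ! := by
  obtain ⟨ε, hε, hKε⟩ := hK.exists_prod_closedBall_subset hW (y := (0 : ℂ))
    fun p ⟨hp, hp0⟩ => (mem_singleton_iff.mp hp0 ▸ hKW p.1 hp :)
  lift ε to ℝ≥0 using hε.le
  obtain ⟨M, hM⟩ := (hK.prod (isCompact_closedBall 0 ε)).exists_bound_of_continuousOn
    (hF.continuousOn.mono hKε)
  refine ⟨max M ε⁻¹, lt_max_of_lt_right (inv_pos.mpr hε), fun j x hx => ?_⟩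
  have hxε : ∀ t ∈ closedBall (0 : ℂ) ε, (x, t) ∈ W := fun t ht => hKε ⟨hx, ht⟩
  have hslice : DifferentiableOn ℂ (fun t => F (x, t)) (closedBall 0 ε) :=
    hF.comp ((differentiableOn_const x).prodMk differentiableOn_id) hxε
  have hseries : HasFPowerSeriesOnBall (fun t => F (x, t))
      (ofScalars ℂ fun j => f j x / j !) 0 ε := by
    refine hasFPowerSeriesOnBall_ofScalars_of_hasSum (NNReal.coe_pos.mp hε) ?_ fun t ht => ?_
    · have hεW := hxε ε (by simp [abs_of_pos hε])
      simpa [norm_div, norm_mul, abs_of_pos hε, div_mul_eq_mul_div] using (hsum _ hεW).1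
    · simpa [div_mul_eq_mul_div] using (hsum _ (hxε t (ball_subset_closedBall ht))).2
  have hcoeff := hseries.hasFPowerSeriesAt.norm_coeff_le hε (hslice.diffContOnCl_ball subset_rfl)
    (fun t ht => hM (x, t) ⟨hx, sphere_subset_closedBall ht⟩) j
  have hj : (0 : ℝ) < j ! := mod_cast j.factorial_pos
  rw [norm_div, Complex.norm_natCast, div_le_iff₀ hj] at hcoeff
  refine hcoeff.trans (mul_le_mul_of_nonneg_right ?_ hj.le)
  rw [div_eq_mul_inv, ← inv_pow, pow_succ']
  exact mul_le_mul (le_max_left _ _) (pow_le_pow_left₀ (by positivity) (le_max_right _ _) j)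
    (by positivity) (le_max_of_le_right (by positivity))

end

/-- for a sequence `(f_j)` of holomorphic functions on an open set
`U ⊆ ℂ^d`, the growth condition `sup_K |f_j| ≤ C^{j+1}·j!` on every compact `K ⊆ U` is
equivalent to the existence of a holomorphic function `F` on an open neighborhood
`W ⊆ U × ℂ` of `U × {0}` with `F(x,t) = Σ_j f_j(x)·t^j/j!` (absolutely convergent)
on `W`.  (This is the paper's identification `O_X^τ(0) ≅ O_{X×ℂ}|_{X×{0}}`.) -/
theorem growth_iff_holomorphic_extension (d : ℕ) (U : Set (Fin d → ℂ)) (hU : IsOpen U)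
    (f : ℕ → (Fin d → ℂ) → ℂ) (hf : ∀ j : ℕ, DifferentiableOn ℂ (f j) U) :
    (∀ K : Set (Fin d → ℂ), K ⊆ U → IsCompact K →
      ∃ C : ℝ, 0 < C ∧ ∀ j : ℕ, ∀ x ∈ K, ‖f j x‖ ≤ C ^ (j + 1) * j.factorial) ↔
    (∃ (W : Set ((Fin d → ℂ) × ℂ)) (F : (Fin d → ℂ) × ℂ → ℂ),
      IsOpen W ∧ W ⊆ U ×ˢ (Set.univ : Set ℂ) ∧ (∀ x ∈ U, ((x, (0 : ℂ)) ∈ W)) ∧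
      DifferentiableOn ℂ F W ∧
      ∀ p ∈ W, (Summable fun j : ℕ => ‖f j p.1 * p.2 ^ j / j.factorial‖) ∧
        HasSum (fun j : ℕ => f j p.1 * p.2 ^ j / j.factorial) (F p)) := by
  constructor
  · intro hgrowth
    refine exists_hasSum_of_locally_norm_le_pow_mul_factorial hf fun x hx => ?_
    obtain ⟨ε, hε, hεU⟩ := nhds_basis_closedBall.mem_iff.mp (hU.mem_nhds hx)
    obtain ⟨C, hC, hfC⟩ := hgrowth _ hεU (isCompact_closedBall x ε)
    exact ⟨ball x ε, isOpen_ball, mem_ball_self hε, ball_subset_closedBall.trans hεU,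
      C, hC, fun j y hy => hfC j y (ball_subset_closedBall hy)⟩
  · rintro ⟨W, F, hW, -, hW0, hF, hsum⟩ K hKU hK
    exact exists_norm_le_pow_mul_factorial_of_hasSum hW hF hsum hK fun x hx => hW0 x (hKU hx)
end
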